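/- For every r > 0 the derivative λ_i'(r) exists and satisfies 0 < λ_i'(r) ≤ λ_i(r)/r; consequently λ_i is strictly increasing on [0,∞) and λ_i'(r) ≤ √(1+T) for all r > 0. -/

import Mathlib

open Real

/-- `u(r) = (1-ε)+(T-ε)r²`. -/
noncomputable def uu (ε T r : ℝ) : ℝ := (1 - ε) + (T - ε) * r ^ 2

/-- The ion dispersion relation `λ_i`. -/
noncomputable def lamI (ε T r : ℝ) : ℝ :=
  (Real.sqrt ε)⁻¹ *
    Real.sqrt (((1 + ε) + (T + ε) * r ^ 2 - Real.sqrt ((uu ε T r) ^ 2 + 4 * ε)) / 2)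

/-- The electron dispersion relation `λ_e`. -/
noncomputable def lamE (ε T r : ℝ) : ℝ :=
  (Real.sqrt ε)⁻¹ *
    Real.sqrt (((1 + ε) + (T + ε) * r ^ 2 + Real.sqrt ((uu ε T r) ^ 2 + 4 * ε)) / 2)

/-- `H₁(r) = √(1+r²)`. -/
noncomputable def H1 (r : ℝ) : ℝ := Real.sqrt (1 + r ^ 2)

/-- `H_ε(r) = ε^{-1/2}√(1+Tr²)`. -/
noncomputable def Heps (ε T r : ℝ) : ℝ := (Real.sqrt ε)⁻¹ * Real.sqrt (1 + T * r ^ 2)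

/-! Write `λ_i = ε^{-1/2} √g` with `g = (A - v)/2` and `A = (1+ε)+(T+ε)r²`. Since
`v² = u² + 4ε`, one has `A² - v² = 4εr²(1+T+Tr²)`, so `g > 0` for `r ≠ 0`, and, as
`A + v ≥ A + u = 2(1+Tr²)`, also `g ≤ ε(1+T)r²`, i.e. `λ_i ≤ r√(1+T)`.
Now `λ_i' > 0` iff `g' > 0`, i.e. `(T-ε)u < (T+ε)v`, which holds because `|u| < v`.
And `λ_i' ≤ λ_i/r` iff `r g' ≤ 2g`; using `(T-ε)r² = u - (1-ε)` this becomes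
`(1-ε)u + 4ε ≤ (1+ε)v`, whose squared form differs by exactly `4ε(u-(1-ε))²`. -/

noncomputable def vv (ε T r : ℝ) : ℝ := √(uu ε T r ^ 2 + 4 * ε)

/-- `ε λ_i(r)²`. -/
noncomputable def gI (ε T r : ℝ) : ℝ := ((1 + ε) + (T + ε) * r ^ 2 - vv ε T r) / 2

lemma lamI_eq (ε T r : ℝ) : lamI ε T r = (√ε)⁻¹ * √(gI ε T r) := rfl

lemma div_two_sqrt_le_sqrt_div {x y r : ℝ} (hx : 0 < x) (hr : 0 < r) (h : r * y ≤ 2 * x) :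
    y / (2 * √x) ≤ √x / r := by
  rw [div_le_div_iff₀ (by positivity) hr]
  nlinarith [mul_self_sqrt hx.le]

section

variable {ε T r : ℝ}

lemma vv_sq (hε : 0 ≤ ε) : vv ε T r ^ 2 = uu ε T r ^ 2 + 4 * ε :=
  sq_sqrt (by positivity)

lemma abs_uu_lt_vv (hε : 0 < ε) : |uu ε T r| < vv ε T r := by
  rw [vv, ← sqrt_sq_eq_abs]
  exact sqrt_lt_sqrt (sq_nonneg _) (by linarith)

lemma sq_sub_vv_sq (hε : 0 ≤ ε) :
    ((1 + ε) + (T + ε) * r ^ 2) ^ 2 - vv ε T r ^ 2 = 4 * ε * r ^ 2 * (1 + T + T * r ^ 2) := by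
  rw [vv_sq hε, uu]; ring

lemma gI_nonneg (hε : 0 < ε) (hT : 0 ≤ T) : 0 ≤ gI ε T r := by
  have h := sq_sub_vv_sq (T := T) (r := r) hε.le
  have hsq : vv ε T r ^ 2 ≤ ((1 + ε) + (T + ε) * r ^ 2) ^ 2 := by
    nlinarith [show 0 ≤ 4 * ε * r ^ 2 * (1 + T + T * r ^ 2) by positivity]
  rw [gI]
  linarith [le_of_pow_le_pow_left₀ two_ne_zero (by positivity) hsq]

lemma gI_pos (hε : 0 < ε) (hT : 0 ≤ T) (hr : r ≠ 0) : 0 < gI ε T r := by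
  have h := sq_sub_vv_sq (T := T) (r := r) hε.le
  have hpos : 0 < 4 * ε * r ^ 2 * (1 + T + T * r ^ 2) := by positivity
  rw [gI]
  linarith [lt_of_pow_lt_pow_left₀ 2 (by positivity) (sub_pos.1 (h ▸ hpos))]

lemma gI_le (hε : 0 < ε) (hT : 0 ≤ T) : gI ε T r ≤ ε * (1 + T) * r ^ 2 := by
  have h := sq_sub_vv_sq (T := T) (r := r) hε.le
  have huv := (le_abs_self _).trans (abs_uu_lt_vv (T := T) (r := r) hε).le
  have hg := gI_nonneg (r := r) hε hT
  have hAu : (1 + ε) + (T + ε) * r ^ 2 + uu ε T r = 2 * (1 + T * r ^ 2) := by rw [uu]; ring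
  -- `(A - v)(A + u) ≤ (A - v)(A + v) = 4εr²(1+T+Tr²) ≤ 4εr²(1+T)(1+Tr²)`
  have key : gI ε T r * (1 + T * r ^ 2) ≤ ε * (1 + T) * r ^ 2 * (1 + T * r ^ 2) := by
    rw [gI] at hg ⊢
    nlinarith [mul_le_mul_of_nonneg_left huv hg, mul_nonneg (mul_nonneg hε.le (sq_nonneg r))
      (mul_nonneg hT (sq_nonneg r))]
  exact le_of_mul_le_mul_right key (by positivity)

lemma lamI_le_mul_sqrt (hε : 0 < ε) (hT : 0 ≤ T) (hr : 0 ≤ r) :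
    lamI ε T r ≤ r * √(1 + T) :=
  calc lamI ε T r ≤ (√ε)⁻¹ * √(ε * ((1 + T) * r ^ 2)) := by
        rw [lamI_eq, ← mul_assoc ε]
        gcongr
        exact gI_le hε hT
    _ = r * √(1 + T) := by
        rw [sqrt_mul hε.le, sqrt_mul (by linarith), sqrt_sq hr, inv_mul_cancel_left₀ (by positivity),
          mul_comm]

lemma hasDerivAt_gI (hε : 0 < ε) :
    HasDerivAt (gI ε T) (r * ((T + ε) - (T - ε) * uu ε T r / vv ε T r)) r := by
  have hu : HasDerivAt (fun x => uu ε T x) ((T - ε) * (2 * r)) r := by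
    simpa [uu] using ((hasDerivAt_pow 2 r).const_mul (T - ε)).const_add (1 - ε)
  have hv : HasDerivAt (vv ε T) (2 * uu ε T r ^ (2 - 1) * ((T - ε) * (2 * r)) / (2 * vv ε T r)) r :=
    ((hu.fun_pow 2).add_const (4 * ε)).sqrt
      (add_pos_of_nonneg_of_pos (sq_nonneg (uu ε T r)) (by linarith)).ne'
  have hA := ((hasDerivAt_pow 2 r).const_mul (T + ε)).const_add (1 + ε)
  refine ((hA.sub hv).div_const 2).congr_deriv ?_
  have hv0 : vv ε T r ≠ 0 := ((abs_nonneg _).trans_lt (abs_uu_lt_vv hε)).ne'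
  field_simp
  ring

lemma sub_mul_uu_div_vv_lt (hε : 0 < ε) (hT : 0 ≤ T) :
    (T - ε) * uu ε T r / vv ε T r < T + ε := by
  have huv := abs_uu_lt_vv (T := T) (r := r) hε
  rw [div_lt_iff₀ ((abs_nonneg _).trans_lt huv)]
  calc (T - ε) * uu ε T r ≤ |T - ε| * |uu ε T r| := by rw [← abs_mul]; exact le_abs_self _
    _ ≤ (T + ε) * |uu ε T r| := by
        gcongr
        exact abs_le.2 ⟨by linarith, by linarith⟩
    _ < (T + ε) * vv ε T r := by gcongr

lemma one_sub_mul_uu_add_le (hε : 0 ≤ ε) :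
    (1 - ε) * uu ε T r + 4 * ε ≤ (1 + ε) * vv ε T r := by
  have hsq : ((1 + ε) * vv ε T r) ^ 2
      = ((1 - ε) * uu ε T r + 4 * ε) ^ 2 + 4 * ε * (uu ε T r - (1 - ε)) ^ 2 := by
    rw [mul_pow, vv_sq hε]; ring
  exact (le_abs_self _).trans (abs_le_of_sq_le_sq (by nlinarith [sq_nonneg (uu ε T r - (1 - ε))])
    (mul_nonneg (by linarith) (sqrt_nonneg _)))

lemma mul_deriv_gI_le (hε : 0 < ε) :
    r * (r * ((T + ε) - (T - ε) * uu ε T r / vv ε T r)) ≤ 2 * gI ε T r := by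
  have hv : 0 < vv ε T r := (abs_nonneg _).trans_lt (abs_uu_lt_vv hε)
  have hkey := one_sub_mul_uu_add_le (T := T) (r := r) hε.le
  have hv2 := vv_sq (T := T) (r := r) hε.le
  have hu : (T - ε) * r ^ 2 = uu ε T r - (1 - ε) := by rw [uu]; ring
  have hdiff : 2 * gI ε T r - r * (r * ((T + ε) - (T - ε) * uu ε T r / vv ε T r))
      = ((1 + ε) * vv ε T r - (1 - ε) * uu ε T r - 4 * ε) / vv ε T r := by
    rw [gI]
    field_simp
    linear_combination uu ε T r * hu - hv2
  have hnum : 0 ≤ (1 + ε) * vv ε T r - (1 - ε) * uu ε T r - 4 * ε := by linarith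
  linarith [div_nonneg hnum hv.le]

theorem exists_hasDerivAt_lamI (hε : 0 < ε) (hT : 0 ≤ T) (hr : 0 < r) :
    ∃ d, HasDerivAt (lamI ε T) d r ∧ 0 < d ∧ d ≤ lamI ε T r / r := by
  have hg := gI_pos hε hT hr.ne'
  have hg' : 0 < r * ((T + ε) - (T - ε) * uu ε T r / vv ε T r) :=
    mul_pos hr (sub_pos.2 (sub_mul_uu_div_vv_lt hε hT))
  refine ⟨_, ((hasDerivAt_gI hε).sqrt hg.ne').const_mul (√ε)⁻¹, by positivity, ?_⟩
  rw [lamI_eq, mul_div_assoc _ (√(gI ε T r))]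
  exact mul_le_mul_of_nonneg_left (div_two_sqrt_le_sqrt_div hg hr (mul_deriv_gI_le hε))
    (by positivity)

theorem strictMonoOn_lamI (hε : 0 < ε) (hT : 0 ≤ T) : StrictMonoOn (lamI ε T) (Set.Ici 0) := by
  have hcont : Continuous (lamI ε T) := by
    unfold lamI uu
    fun_prop
  refine strictMonoOn_of_deriv_pos (convex_Ici 0) hcont.continuousOn fun r hr => ?_
  rw [interior_Ici] at hr
  obtain ⟨d, hd, hd0, -⟩ := exists_hasDerivAt_lamI hε hT hr
  rwa [hd.deriv]

end

theorem stmt19_general (ε T : ℝ) (hε : 0 < ε) (hT : 1 ≤ T) :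
    (∀ r : ℝ, 0 < r → ∃ d : ℝ, HasDerivAt (lamI ε T) d r ∧ 0 < d ∧ d ≤ lamI ε T r / r) ∧
    StrictMonoOn (lamI ε T) (Set.Ici 0) ∧
    (∀ r : ℝ, 0 < r → deriv (lamI ε T) r ≤ Real.sqrt (1 + T)) := by
  have hT0 : 0 ≤ T := by linarith
  refine ⟨fun r hr => exists_hasDerivAt_lamI hε hT0 hr, strictMonoOn_lamI hε hT0, fun r hr => ?_⟩
  obtain ⟨d, hd, -, hdle⟩ := exists_hasDerivAt_lamI hε hT0 hr
  rw [hd.deriv]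
  exact hdle.trans ((div_le_iff₀' hr).2 (lamI_le_mul_sqrt hε hT0 hr.le))

/-- For every `r > 0` the derivative `λ_i'(r)` exists with `0 < λ_i'(r) ≤ λ_i(r)/r`;
consequently `λ_i` is strictly increasing on `[0,∞)` and `λ_i'(r) ≤ √(1+T)`. -/
theorem stmt19 (ε T : ℝ) (hε : 0 < ε) (hε' : ε ≤ 1 / 1000) (hT : 1 ≤ T) (hT' : T ≤ 100) :
    (∀ r : ℝ, 0 < r → ∃ d : ℝ, HasDerivAt (lamI ε T) d r ∧ 0 < d ∧ d ≤ lamI ε T r / r) ∧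
    StrictMonoOn (lamI ε T) (Set.Ici 0) ∧
    (∀ r : ℝ, 0 < r → deriv (lamI ε T) r ≤ Real.sqrt (1 + T)) :=
  stmt19_general ε T hε hT
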